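/- Let (e_j, f_j), j = 1, …, k, be pairwise orthogonal hyperbolic pairs and let v be a unit vector (Q v = 1) orthogonal to all e_j, f_j; set Σ₂ₖ₊₁ := i^k * ι v * ∏_{j=1}^k (1 − ι e_j * ι f_j). Then the twisted conjugation action u ↦ involute(Σ₂ₖ₊₁) * ι u * star(Σ₂ₖ₊₁) fixes ι u for every u in the ℂ-span of {v, e₁, f₁, …, e_k, f_k}, and sends ι u to −ι u for every vector u orthogonal to all of v, e₁, f₁, …, e_k, f_k. (Thus Σ₂ₖ₊₁ acts on V as −1 times the map that is −Id on the (2k+1)-dimensional block and Id on its complement.) -/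

import Mathlib

open CliffordAlgebra QuadraticMap

/-! For a hyperbolic pair `(e, f)` the factor `F = 1 - ι e * ι f` is even, `F * star F = -1`, and
`x ↦ F * x * star F` fixes `ι e` and `ι f`, while it negates `ι u` for `u ⊥ e, f` since such `ι u`
commutes with `ι e * ι f`. Pairwise orthogonality lets the factors act independently, so the
product of the `k` factors acts by `(-1)^k` on the orthogonal complement of the pairs and by
`-(-1)^k` on each `ι e_m`, `ι f_m`. The twisted conjugation by `i^k • ι v` contributes
`(i^k)^2 = (-1)^k` and the reflection `x ↦ ι v * x * ι v`, which fixes `ι v` and negates vectors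
orthogonal to `v`; the signs multiply out to the claim. -/

theorem List.prod_ofFn_mul_mul_star_prod_ofFn {R A : Type*} [CommSemiring R] [Semiring A]
    [StarMul A] [Algebra R A] {n : ℕ} (F : Fin n → A) (c : Fin n → R) (X : A)
    (h : ∀ j, F j * X * star (F j) = c j • X) :
    (List.ofFn F).prod * X * star (List.ofFn F).prod = (∏ j, c j) • X := by
  induction n with
  | zero => simp
  | succ n ih =>
    calc (List.ofFn F).prod * X * star (List.ofFn F).prod
        = F 0 * ((List.ofFn fun j => F j.succ).prod * X * star (List.ofFn fun j => F j.succ).prod)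
            * star (F 0) := by simp only [List.ofFn_succ, List.prod_cons, star_mul, mul_assoc]
      _ = (∏ j, c j) • X := by
        rw [ih _ _ fun j => h j.succ, mul_smul_comm, smul_mul_assoc, h 0, smul_smul,
          Fin.prod_univ_succ, mul_comm]

theorem Fintype.prod_ite_eq_one_neg_one {ι R : Type*} [Fintype ι] [DecidableEq ι] [CommRing R]
    (m : ι) : ∏ j, (if j = m then (1 : R) else -1) = -(-1) ^ Fintype.card ι := by
  have h : ∀ j, (if j = m then (1 : R) else -1) = -1 * (if j = m then -1 else 1) := by
    intro j; split_ifs <;> simp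
  simp_rw [h, Finset.prod_mul_distrib, Finset.prod_const, Finset.card_univ]
  simp

namespace CliffordAlgebra

variable {R M : Type*} [CommRing R] [AddCommGroup M] [Module R M] {Q : QuadraticForm R M}

theorem commute_ι_ι_mul_ι {u a b : M} (ha : polar Q u a = 0) (hb : polar Q u b = 0) :
    Commute (ι Q u) (ι Q a * ι Q b) := by
  rw [Commute, SemiconjBy, ι_mul_ι_mul_of_isOrtho _ (isOrtho_polarBilin.mp ha),
    ι_mul_ι_comm_of_isOrtho (isOrtho_polarBilin.mp hb), mul_neg, neg_neg, mul_assoc]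

theorem star_one_sub_ι_mul_ι (a b : M) :
    star (1 - ι Q a * ι Q b) = 1 - ι Q b * ι Q a := by
  simp only [star_sub, star_one, star_mul, star_ι, neg_mul_neg]

theorem one_sub_ι_mul_ι_mul_star {a b : M} (hb : Q b = 0) (hab : polar Q a b = 2) :
    (1 - ι Q a * ι Q b) * star (1 - ι Q a * ι Q b) = -1 := by
  have hbb : ι Q b * ι Q b = 0 := by rw [ι_sq_scalar, hb, map_zero]
  have hsym : ι Q a * ι Q b + ι Q b * ι Q a = 2 := by rw [ι_mul_ι_add_swap, hab, map_ofNat]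
  calc (1 - ι Q a * ι Q b) * star (1 - ι Q a * ι Q b)
      = 1 - (ι Q a * ι Q b + ι Q b * ι Q a) + ι Q a * (ι Q b * ι Q b) * ι Q a := by
        rw [star_one_sub_ι_mul_ι]; noncomm_ring
    _ = -1 := by rw [hsym, hbb]; norm_num

theorem one_sub_ι_mul_ι_conj_left {a b : M} (ha : Q a = 0) (hab : polar Q a b = 2) :
    (1 - ι Q a * ι Q b) * ι Q a * star (1 - ι Q a * ι Q b) = ι Q a := by
  have haba : ι Q a * ι Q b * ι Q a = 2 * ι Q a := by
    rw [ι_mul_ι_mul_ι, hab, ha, zero_smul, sub_zero, two_smul, map_add, two_mul]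
  calc (1 - ι Q a * ι Q b) * ι Q a * star (1 - ι Q a * ι Q b)
      = ι Q a - 2 * (ι Q a * ι Q b * ι Q a) + ι Q a * ι Q b * (ι Q a * ι Q b * ι Q a) := by
        rw [star_one_sub_ι_mul_ι]; noncomm_ring
    _ = ι Q a - 2 * (2 * ι Q a) + ι Q a * ι Q b * (2 * ι Q a) := by rw [haba]
    _ = ι Q a - 4 * ι Q a + 2 * (ι Q a * ι Q b * ι Q a) := by noncomm_ring
    _ = ι Q a := by rw [haba]; noncomm_ring

theorem one_sub_ι_mul_ι_conj_right (a : M) {b : M} (hb : Q b = 0) :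
    (1 - ι Q a * ι Q b) * ι Q b * star (1 - ι Q a * ι Q b) = ι Q b := by
  have hbb : ι Q b * ι Q b = 0 := by rw [ι_sq_scalar, hb, map_zero]
  calc (1 - ι Q a * ι Q b) * ι Q b * star (1 - ι Q a * ι Q b)
      = ι Q b - ι Q a * (ι Q b * ι Q b) - ι Q b * ι Q b * ι Q a
          + ι Q a * (ι Q b * ι Q b) * ι Q b * ι Q a := by
        rw [star_one_sub_ι_mul_ι]; noncomm_ring
    _ = ι Q b := by simp [hbb]

theorem one_sub_ι_mul_ι_conj_of_polar_eq_zero {a b u : M} (hb : Q b = 0)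
    (hab : polar Q a b = 2) (hua : polar Q u a = 0) (hub : polar Q u b = 0) :
    (1 - ι Q a * ι Q b) * ι Q u * star (1 - ι Q a * ι Q b) = -ι Q u := by
  have hcomm : Commute (ι Q u) (star (1 - ι Q a * ι Q b)) := by
    rw [star_one_sub_ι_mul_ι]
    exact (Commute.one_right _).sub_right (commute_ι_ι_mul_ι hub hua)
  rw [mul_assoc, hcomm.eq, ← mul_assoc, one_sub_ι_mul_ι_mul_star hb hab, neg_one_mul]

theorem involute_smul_ι_mul_conj {P : CliffordAlgebra Q} (hP : involute P = P) (c : R) (v : M)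
    (X : CliffordAlgebra Q) :
    involute (c • (ι Q v * P)) * X * star (c • (ι Q v * P)) =
      (c * c) • (ι Q v * (P * X * star P) * ι Q v) := by
  rw [map_smul, map_mul, involute_ι, hP, star_smul, star_mul, star_ι]
  simp only [smul_mul_assoc, mul_smul_comm, smul_smul]
  congr 1
  noncomm_ring

theorem ι_mul_ι_mul_ι_of_polar_eq_zero {v w : M} (hv : Q v = 1) (hvw : polar Q v w = 0) :
    ι Q v * ι Q w * ι Q v = -ι Q w := by
  rw [ι_mul_ι_mul_ι, hvw, hv, zero_smul, one_smul, zero_sub, map_neg]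

theorem ι_mul_ι_mul_ι_self {v : M} (hv : Q v = 1) : ι Q v * ι Q v * ι Q v = ι Q v := by
  rw [ι_mul_ι_mul_ι, polar_self, hv, one_smul, two_nsmul, add_smul, one_smul, add_sub_cancel_right]

variable (Q) in
def hyperbolicProd {k : ℕ} (e f : Fin k → M) : CliffordAlgebra Q :=
  (List.ofFn fun j => 1 - ι Q (e j) * ι Q (f j)).prod

theorem involute_hyperbolicProd {k : ℕ} (e f : Fin k → M) :
    involute (hyperbolicProd Q e f) = hyperbolicProd Q e f := by
  simp [hyperbolicProd, map_list_prod, List.map_ofFn, Function.comp_def]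

theorem hyperbolicProd_conj_of_orthogonal {k : ℕ} {e f : Fin k → M} (hQf : ∀ j, Q (f j) = 0)
    (hef : ∀ j, polar Q (e j) (f j) = 2) {u : M} (hue : ∀ j, polar Q u (e j) = 0)
    (huf : ∀ j, polar Q u (f j) = 0) :
    hyperbolicProd Q e f * ι Q u * star (hyperbolicProd Q e f) = ((-1) ^ k : R) • ι Q u := by
  have h : ∀ j, (1 - ι Q (e j) * ι Q (f j)) * ι Q u * star (1 - ι Q (e j) * ι Q (f j)) =
      (-1 : R) • ι Q u := fun j => by
    rw [neg_one_smul]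
    exact one_sub_ι_mul_ι_conj_of_polar_eq_zero (hQf j) (hef j) (hue j) (huf j)
  rw [hyperbolicProd, List.prod_ofFn_mul_mul_star_prod_ofFn _ _ _ h, Finset.prod_const,
    Finset.card_univ, Fintype.card_fin]

theorem hyperbolicProd_conj_left {k : ℕ} {e f : Fin k → M} (hQe : ∀ j, Q (e j) = 0)
    (hQf : ∀ j, Q (f j) = 0) (hef : ∀ j, polar Q (e j) (f j) = 2)
    (horth : ∀ i j, i ≠ j → polar Q (e i) (e j) = 0 ∧ polar Q (e i) (f j) = 0) (m : Fin k) :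
    hyperbolicProd Q e f * ι Q (e m) * star (hyperbolicProd Q e f) =
      (-(-1) ^ k : R) • ι Q (e m) := by
  have h : ∀ j, (1 - ι Q (e j) * ι Q (f j)) * ι Q (e m) * star (1 - ι Q (e j) * ι Q (f j)) =
      (if j = m then 1 else -1 : R) • ι Q (e m) := fun j => by
    split_ifs with hjm
    · rw [hjm, one_smul]
      exact one_sub_ι_mul_ι_conj_left (hQe m) (hef m)
    · have hmj := horth m j (Ne.symm hjm)
      rw [neg_one_smul]
      exact one_sub_ι_mul_ι_conj_of_polar_eq_zero (hQf j) (hef j) hmj.1 hmj.2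
  rw [hyperbolicProd, List.prod_ofFn_mul_mul_star_prod_ofFn _ _ _ h,
    Fintype.prod_ite_eq_one_neg_one, Fintype.card_fin]

theorem hyperbolicProd_conj_right {k : ℕ} {e f : Fin k → M} (hQf : ∀ j, Q (f j) = 0)
    (hef : ∀ j, polar Q (e j) (f j) = 2)
    (horth : ∀ i j, i ≠ j → polar Q (e i) (f j) = 0 ∧ polar Q (f i) (f j) = 0) (m : Fin k) :
    hyperbolicProd Q e f * ι Q (f m) * star (hyperbolicProd Q e f) =
      (-(-1) ^ k : R) • ι Q (f m) := by
  have h : ∀ j, (1 - ι Q (e j) * ι Q (f j)) * ι Q (f m) * star (1 - ι Q (e j) * ι Q (f j)) =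
      (if j = m then 1 else -1 : R) • ι Q (f m) := fun j => by
    split_ifs with hjm
    · rw [hjm, one_smul]
      exact one_sub_ι_mul_ι_conj_right (e m) (hQf m)
    · rw [neg_one_smul]
      exact one_sub_ι_mul_ι_conj_of_polar_eq_zero (hQf j) (hef j)
        (by rw [polar_comm]; exact (horth j m hjm).1) (horth m j (Ne.symm hjm)).2
  rw [hyperbolicProd, List.prod_ofFn_mul_mul_star_prod_ofFn _ _ _ h,
    Fintype.prod_ite_eq_one_neg_one, Fintype.card_fin]

end CliffordAlgebra

/-- Let `(e j, f j)`, `j = 1, …, k`, be pairwise orthogonal hyperbolic pairs and `v` a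
unit vector orthogonal to all of them; set
`Σ₂ₖ₊₁ = i^k • (ι v * ∏ j (1 - ι (e j) * ι (f j)))`.  The twisted conjugation
`u ↦ involute Σ₂ₖ₊₁ * ι u * star Σ₂ₖ₊₁` fixes `ι u` for every `u` in the `ℂ`-span of
`{v} ∪ {e j} ∪ {f j}`, and sends `ι u` to `-ι u` for every `u` orthogonal to all of
`v`, `e j`, `f j`. -/
theorem sigma_odd_action {V : Type*} [AddCommGroup V] [Module ℂ V]
    (Q : QuadraticForm ℂ V) (k : ℕ) (e f : Fin k → V) (v : V)
    (hQe : ∀ j, Q (e j) = 0) (hQf : ∀ j, Q (f j) = 0)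
    (hef : ∀ j, polar Q (e j) (f j) = 2)
    (horth : ∀ i j, i ≠ j →
      polar Q (e i) (e j) = 0 ∧ polar Q (e i) (f j) = 0 ∧ polar Q (f i) (f j) = 0)
    (hv : Q v = 1)
    (hve : ∀ j, polar Q v (e j) = 0) (hvf : ∀ j, polar Q v (f j) = 0)
    (S : CliffordAlgebra Q)
    (hS : S = (Complex.I ^ k) •
      (ι Q v * (List.ofFn (fun j : Fin k => 1 - ι Q (e j) * ι Q (f j))).prod)) :
    (∀ u ∈ Submodule.span ℂ ({v} ∪ Set.range e ∪ Set.range f),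
      involute S * ι Q u * star S = ι Q u) ∧
    (∀ u : V, polar Q u v = 0 → (∀ j, polar Q u (e j) = 0) →
      (∀ j, polar Q u (f j) = 0) →
      involute S * ι Q u * star S = -(ι Q u)) := by
  set P := hyperbolicProd Q e f
  replace hS : S = Complex.I ^ k • (ι Q v * P) := hS
  have hconj : ∀ (w : V) (c : ℂ), P * ι Q w * star P = c • ι Q w →
      involute S * ι Q w * star S = ((-1) ^ k * c) • (ι Q v * ι Q w * ι Q v) := by
    intro w c hw
    rw [hS, involute_smul_ι_mul_conj (involute_hyperbolicProd e f), ← mul_pow, Complex.I_mul_I,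
      hw, mul_smul_comm, smul_mul_assoc, smul_smul]
  have hsq : (-1 : ℂ) ^ k * (-1) ^ k = 1 := by rw [← mul_pow, neg_one_mul, neg_neg, one_pow]
  have hpair : ∀ w, P * ι Q w * star P = (-(-1) ^ k : ℂ) • ι Q w → polar Q v w = 0 →
      involute S * ι Q w * star S = ι Q w := fun w hw hvw => by
    rw [hconj w _ hw, mul_neg, hsq, neg_one_smul, ι_mul_ι_mul_ι_of_polar_eq_zero hv hvw, neg_neg]
  refine ⟨fun u hu => ?_, fun u huv hue huf => ?_⟩
  · let T : V →ₗ[ℂ] CliffordAlgebra Q :=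
      LinearMap.mulRight ℂ (star S) ∘ₗ LinearMap.mulLeft ℂ (involute S) ∘ₗ ι Q
    refine LinearMap.eqOn_span' (f := T) ?_ hu
    rintro w ((hw | ⟨m, rfl⟩) | ⟨m, rfl⟩)
    · rw [Set.mem_singleton_iff.mp hw]
      change involute S * ι Q v * star S = ι Q v
      rw [hconj v _ (hyperbolicProd_conj_of_orthogonal hQf hef hve hvf), hsq, one_smul,
        ι_mul_ι_mul_ι_self hv]
    · exact hpair _ (hyperbolicProd_conj_left hQe hQf hef
        (fun i j hij => ⟨(horth i j hij).1, (horth i j hij).2.1⟩) m) (hve m)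
    · exact hpair _ (hyperbolicProd_conj_right hQf hef
        (fun i j hij => (horth i j hij).2) m) (hvf m)
  · rw [hconj u _ (hyperbolicProd_conj_of_orthogonal hQf hef hue huf), hsq, one_smul,
      ι_mul_ι_mul_ι_of_polar_eq_zero hv (by rwa [polar_comm])]
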